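/- arXiv:1211.6006 — 3 statements merged into one kernel-verified Lean document; each statement's English description precedes it below -/
import Mathlib

section
/- Let p be a prime, n ≥ 1, and R a commutative ring. For every maximal ideal 𝔐 of the ring W_n(R) of p-typical Witt vectors of length n there exists a maximal ideal 𝔭 of R such that the quotient map W_n(R) → W_n(R)/𝔐 factors through the ring homomorphism W_n(R) → W_n(R_𝔭) induced by the localization map R → R_𝔭. (This is the p-typical case of Lemma 1.1.6 of the paper.) -/
/-!
A ring homomorphism `φ` from `W(R)` to a field `K` that kills `V^n W(R)` factors through a ghost
component. Let `i` be largest with `φ (V^i W(R)) ≠ 0`. The identity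
`V^i x * V^i y = p^i V^i (x y)` forces `p^i ≠ 0` in `K` and `φ (V^i 1) = p^i`, and makes
`ψ = p^{-i} φ ∘ V^i` a ring homomorphism killing `V`, so `ψ = χ ∘ w₀` for some `χ : R →+* K`.
The projection formula `V^i (F^i x) = V^i 1 * x` then gives `φ = ψ ∘ F^i = χ ∘ wᵢ`.
For `W_n(R) → W_n(R)/𝔐` it remains to extend `χ` to `R_𝔭` for a maximal ideal `𝔭 ⊇ ker χ`,
using that ghost components commute with `W_n(R) → W_n(R_𝔭)`.
-/

namespace TruncatedWittVector

variable {p : ℕ} [Fact p.Prime] {n : ℕ} {R S : Type*} [CommRing R] [CommRing S]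

noncomputable def map (f : R →+* S) :
    TruncatedWittVector p n R →+* TruncatedWittVector p n S :=
  RingHom.liftOfRightInverse (WittVector.truncate n) out truncateFun_out
    ⟨(WittVector.truncate n).comp (WittVector.map f), by
      intro x hx
      rw [WittVector.mem_ker_truncate] at hx
      rw [RingHom.mem_ker, RingHom.comp_apply, ← RingHom.mem_ker,
        WittVector.mem_ker_truncate]
      intro i hi
      rw [WittVector.map_coeff, hx i hi, map_zero]⟩

theorem map_coeff' (f : R →+* S) (x : TruncatedWittVector p n R) (i : Fin n) :
    (map f x).coeff i = f (x.coeff i) := by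
  obtain ⟨y, rfl⟩ := WittVector.truncate_surjective p n R x
  have h1 : map f (WittVector.truncate n y) =
      WittVector.truncate n (WittVector.map f y) :=
    RingHom.liftOfRightInverse_comp_apply _ _ _ _ y
  rw [h1, WittVector.coeff_truncate, WittVector.coeff_truncate, WittVector.map_coeff]

end TruncatedWittVector

open Function

namespace WittVector

variable {p : ℕ} [Fact p.Prime] {R : Type*} [CommRing R]

local notation "𝕎" => WittVector p

theorem iterate_frobenius_natCast (i k : ℕ) : frobenius^[i] (k : 𝕎 R) = k := by
  rw [← RingHom.coe_pow, map_natCast]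

theorem iterate_frobenius_iterate_verschiebung (i : ℕ) (x : 𝕎 R) :
    frobenius^[i] (verschiebung^[i] x) = x * (p : 𝕎 R) ^ i := by
  induction i generalizing x with
  | zero => simp
  | succ i ih =>
    rw [iterate_succ_apply, iterate_succ_apply', frobenius_verschiebung, iterate_map_mul, ih,
      iterate_frobenius_natCast, pow_succ, mul_assoc]

theorem iterate_verschiebung_mul_iterate_verschiebung (i : ℕ) (x y : 𝕎 R) :
    verschiebung^[i] x * verschiebung^[i] y = verschiebung^[i] (x * y) * (p : 𝕎 R) ^ i := by
  rw [iterate_verschiebung_mul_left, iterate_frobenius_iterate_verschiebung,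
    iterate_verschiebung_mul_left, ← Nat.cast_pow, iterate_frobenius_natCast, mul_assoc]

theorem iterate_verschiebung_one_mul (i : ℕ) (x : 𝕎 R) :
    verschiebung^[i] 1 * x = verschiebung^[i] (frobenius^[i] x) := by
  rw [iterate_verschiebung_mul_left, one_mul]

theorem ghostComponent_iterate_frobenius (n i : ℕ) (x : 𝕎 R) :
    ghostComponent n (frobenius^[i] x) = ghostComponent (n + i) x := by
  induction i generalizing x with
  | zero => rfl
  | succ i ih => rw [iterate_succ_apply, ih, ghostComponent_frobenius, add_assoc]

theorem ghostComponent_zero_eq_constantCoeff :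
    ghostComponent 0 = (constantCoeff : 𝕎 R →+* R) := by
  ext x
  simp [ghostComponent_apply]

theorem ghostComponent_map {S : Type*} [CommRing S] (f : R →+* S) (i : ℕ) (x : 𝕎 R) :
    ghostComponent i (map f x) = f (ghostComponent i x) := by
  simp only [ghostComponent_apply, aeval_wittPolynomial, map_sum, map_mul, map_pow, map_natCast,
    map_coeff]

theorem exists_comp_constantCoeff_eq {A : Type*} [Ring A] (ψ : 𝕎 R →+* A)
    (hψ : ∀ x, ψ (verschiebung x) = 0) : ∃ χ : R →+* A, χ.comp constantCoeff = ψ := by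
  refine ⟨constantCoeff.liftOfRightInverse (teichmuller p) (teichmuller_coeff_zero p)
    ⟨ψ, fun x hx => ?_⟩, RingHom.liftOfRightInverse_comp _ _ _ _⟩
  have hx0 : ∀ i < 1, x.coeff i = 0 := by simpa using hx
  rw [RingHom.mem_ker, eq_iterate_verschiebung hx0]
  exact hψ _

theorem exists_last_nonvanishing_iterate_verschiebung {A : Type*} [Semiring A] [Nontrivial A]
    (φ : 𝕎 R →+* A) (n : ℕ) (hn : ∀ z, φ (verschiebung^[n] z) = 0) :
    ∃ i < n, (∀ z, φ (verschiebung^[i + 1] z) = 0) ∧ ∃ y, φ (verschiebung^[i] y) ≠ 0 := by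
  classical
  have hex : ∃ m, ∀ z, φ (verschiebung^[m] z) = 0 := ⟨n, hn⟩
  obtain ⟨m, hm, hmin⟩ : ∃ m, (∀ z, φ (verschiebung^[m] z) = 0) ∧
      ∀ k < m, ¬∀ z, φ (verschiebung^[k] z) = 0 :=
    ⟨Nat.find hex, Nat.find_spec hex, fun _ => Nat.find_min hex⟩
  obtain _ | i := m
  · simpa using hm 1
  refine ⟨i, lt_of_not_ge fun hni => hmin n (by omega) hn, hm, ?_⟩
  simpa using hmin i (by omega)

theorem exists_eq_comp_ghostComponent {K : Type*} [Field K] (φ : 𝕎 R →+* K) (i : ℕ)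
    (hi : ∀ z : 𝕎 R, φ (verschiebung^[i + 1] z) = 0) (y : 𝕎 R)
    (hy : φ (verschiebung^[i] y) ≠ 0) :
    ∃ χ : R →+* K, ∀ x : 𝕎 R, φ x = χ (ghostComponent i x) := by
  have hVV : ∀ x y, φ (verschiebung^[i] x) * φ (verschiebung^[i] y) =
      φ (verschiebung^[i] (x * y)) * (p : K) ^ i := fun x y => by
    rw [← map_mul, iterate_verschiebung_mul_iterate_verschiebung, map_mul, map_pow, map_natCast]
  have hp : (p : K) ^ i ≠ 0 := fun h => hy <| mul_self_eq_zero.mp <| by rw [hVV, h, mul_zero]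
  have hV1 : φ (verschiebung^[i] 1) = (p : K) ^ i :=
    mul_left_cancel₀ hy <| by rw [hVV, mul_one, mul_comm]
  let ψ : 𝕎 R →+* K :=
    { toFun x := ((p : K) ^ i)⁻¹ * φ (verschiebung^[i] x)
      map_one' := by rw [hV1, inv_mul_cancel₀ hp]
      map_mul' x y := by
        rw [mul_mul_mul_comm, hVV]
        field_simp
      map_zero' := by simp [iterate_map_zero]
      map_add' x y := by simp [iterate_map_add, mul_add] }
  obtain ⟨χ, hχ⟩ := exists_comp_constantCoeff_eq ψ fun x => by
    show _ * φ (verschiebung^[i] (verschiebung x)) = 0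
    rw [← iterate_succ_apply, hi, mul_zero]
  refine ⟨χ, fun x => ?_⟩
  calc φ x = ψ (frobenius^[i] x) := by
        simp only [ψ, RingHom.coe_mk, MonoidHom.coe_mk, OneHom.coe_mk]
        rw [← iterate_verschiebung_one_mul, map_mul, hV1, ← mul_assoc, inv_mul_cancel₀ hp, one_mul]
    _ = χ (ghostComponent i x) := by
        rw [← hχ, ← ghostComponent_zero_eq_constantCoeff, RingHom.comp_apply,
          ghostComponent_iterate_frobenius, zero_add]

end WittVector

namespace TruncatedWittVector

variable {p : ℕ} [Fact p.Prime] {n : ℕ} {R S : Type*} [CommRing R] [CommRing S]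

noncomputable def ghostComponent (i : Fin n) : TruncatedWittVector p n R →+* R :=
  (WittVector.truncate n).liftOfRightInverse out truncateFun_out
    ⟨WittVector.ghostComponent i, fun x hx => by
      rw [WittVector.mem_ker_truncate] at hx
      rw [RingHom.mem_ker, WittVector.ghostComponent_apply, aeval_wittPolynomial]
      refine Finset.sum_eq_zero fun j hj => ?_
      rw [hx j (by have := Finset.mem_range.mp hj; omega), zero_pow
        (pow_ne_zero _ (Fact.out : p.Prime).ne_zero), mul_zero]⟩

theorem ghostComponent_comp_truncate (i : Fin n) :
    (ghostComponent i).comp (WittVector.truncate n) =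
      WittVector.ghostComponent (p := p) (R := R) i :=
  RingHom.liftOfRightInverse_comp _ _ _ _

theorem map_comp_truncate (f : R →+* S) :
    (map f).comp (WittVector.truncate n) =
      (WittVector.truncate (p := p) n).comp (WittVector.map f) :=
  RingHom.liftOfRightInverse_comp _ _ _ _

theorem ghostComponent_comp_map (f : R →+* S) (i : Fin n) :
    (ghostComponent i).comp (map f) = f.comp (ghostComponent (p := p) i) := by
  rw [← RingHom.cancel_right (WittVector.truncate_surjective p n R), RingHom.comp_assoc,
    map_comp_truncate, ← RingHom.comp_assoc, ghostComponent_comp_truncate, RingHom.comp_assoc,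
    ghostComponent_comp_truncate]
  exact RingHom.ext (WittVector.ghostComponent_map f i)

theorem truncate_iterate_verschiebung (z : WittVector p R) :
    WittVector.truncate n (WittVector.verschiebung^[n] z) = 0 := by
  rw [← RingHom.mem_ker, WittVector.mem_ker_truncate]
  exact fun i hi => WittVector.iterate_verschiebung_coeff_eq_zero z hi

theorem exists_eq_comp_ghostComponent {K : Type*} [Field K]
    (φ : TruncatedWittVector p n R →+* K) :
    ∃ (i : Fin n) (χ : R →+* K), φ = χ.comp (ghostComponent i) := by
  let φW := φ.comp (WittVector.truncate n)
  obtain ⟨i, hin, hi, y, hy⟩ := WittVector.exists_last_nonvanishing_iterate_verschiebung φW n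
    fun z => by simp [φW, truncate_iterate_verschiebung]
  obtain ⟨χ, hχ⟩ := WittVector.exists_eq_comp_ghostComponent φW i hi y hy
  refine ⟨⟨i, hin⟩, χ, ?_⟩
  rw [← RingHom.cancel_right (WittVector.truncate_surjective p n R), RingHom.comp_assoc,
    ghostComponent_comp_truncate]
  exact RingHom.ext hχ

end TruncatedWittVector

theorem RingHom.exists_isMaximal_comp_algebraMap_atPrime_eq {R K : Type*} [CommRing R] [Field K]
    (χ : R →+* K) : ∃ (𝔭 : Ideal R) (_ : 𝔭.IsMaximal),
      ∃ χ' : Localization.AtPrime 𝔭 →+* K, χ'.comp (algebraMap R _) = χ := by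
  obtain ⟨𝔭, h𝔭, hker⟩ := Ideal.exists_le_maximal _ (RingHom.ker_ne_top χ)
  refine ⟨𝔭, h𝔭, IsLocalization.lift (M := 𝔭.primeCompl) (S := Localization.AtPrime 𝔭)
    fun s => isUnit_iff_ne_zero.mpr fun hs => s.2 (hker hs), IsLocalization.lift_comp _⟩

theorem stmt_0_general (p : ℕ) [Fact p.Prime] (n : ℕ) (R : Type*) [CommRing R]
    (𝔐 : Ideal (TruncatedWittVector p n R)) (h𝔐 : 𝔐.IsMaximal) :
    ∃ (𝔭 : Ideal R) (_ : 𝔭.IsMaximal),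
      ∃ g : TruncatedWittVector p n (Localization.AtPrime 𝔭) →+*
            (TruncatedWittVector p n R ⧸ 𝔐),
        g.comp (TruncatedWittVector.map (algebraMap R (Localization.AtPrime 𝔭))) =
          Ideal.Quotient.mk 𝔐 := by
  let := Ideal.Quotient.field 𝔐
  obtain ⟨i, χ, hχ⟩ := TruncatedWittVector.exists_eq_comp_ghostComponent (Ideal.Quotient.mk 𝔐)
  obtain ⟨𝔭, h𝔭, χ', hχ'⟩ := χ.exists_isMaximal_comp_algebraMap_atPrime_eq
  refine ⟨𝔭, h𝔭, χ'.comp (TruncatedWittVector.ghostComponent i), ?_⟩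
  rw [RingHom.comp_assoc, TruncatedWittVector.ghostComponent_comp_map, ← RingHom.comp_assoc, hχ',
    hχ]

theorem stmt_0 (p : ℕ) [Fact p.Prime] (n : ℕ) (hn : 1 ≤ n) (R : Type*) [CommRing R]
    (𝔐 : Ideal (TruncatedWittVector p n R)) (h𝔐 : 𝔐.IsMaximal) :
    ∃ (𝔭 : Ideal R) (_ : 𝔭.IsMaximal),
      ∃ g : TruncatedWittVector p n (Localization.AtPrime 𝔭) →+*
            (TruncatedWittVector p n R ⧸ 𝔐),
        g.comp (TruncatedWittVector.map (algebraMap R (Localization.AtPrime 𝔭))) =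
          Ideal.Quotient.mk 𝔐 :=
  stmt_0_general p n R 𝔐 h𝔐
end

section
/- Let p be a prime and n ≥ 1. If R is a finitely generated ℤ-algebra, then the ring W_n(R) of p-typical Witt vectors of length n is a Noetherian ring. -/
/-!
Choose generators `x i` of `R` and let `A = ℤ[X_i]` act on `W_m(R)` through `X i ↦ [x i]`.
The kernel of `W_{m+1}(R) → W_m(R)` consists of the vectors `Vᵐ[r] = (0, …, 0, r)`, and
`w * Vᵐ[r] = Vᵐ[wₘ r]` where `wₘ` is the `m`-th ghost component, so this kernel is `R` with
`X i` acting as `x i ^ p ^ m`. Each `x i` is then integral over `A`, so `R` is a finite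
`A`-module, and by induction every `W_m(R)` is a finite module over the Noetherian ring `A`.
-/

open MvPolynomial Function Algebra

theorem MvPolynomial.finite_aeval_pow {S R ι : Type*} [CommRing S] [CommRing R] [Algebra S R]
    [Finite ι] {x : ι → R} (hx : adjoin S (Set.range x) = ⊤) {q : ℕ} (hq : 0 < q) :
    (aeval fun i => x i ^ q : MvPolynomial ι S →ₐ[S] R).Finite := by
  let _ := (aeval fun i => x i ^ q : MvPolynomial ι S →ₐ[S] R).toAlgebra
  have : IsScalarTower S (MvPolynomial ι S) R :=
    .of_algebraMap_eq' (aeval _).comp_algebraMap.symm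
  have htop : adjoin (MvPolynomial ι S) (Set.range x) = ⊤ := by
    refine Subalgebra.restrictScalars_injective S ?_
    rw [Subalgebra.restrictScalars_top, _root_.eq_top_iff, ← hx]
    exact adjoin_le subset_adjoin
  have hint : ∀ y ∈ Set.range x, IsIntegral (MvPolynomial ι S) y := by
    rintro _ ⟨i, rfl⟩
    refine IsIntegral.of_pow hq ?_
    have : algebraMap (MvPolynomial ι S) R (X i) = x i ^ q := aeval_X _ i
    exact this ▸ isIntegral_algebraMap
  have := fg_adjoin_of_finite (Set.finite_range x) hint
  rw [htop] at this
  exact ⟨this⟩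

namespace WittVector

variable {p : ℕ} [Fact p.Prime] {R : Type*} [CommRing R]

theorem coeff_zero_iterate_frobenius (w : WittVector p R) (m : ℕ) :
    (frobenius^[m] w).coeff 0 = ghostComponent m w := by
  induction m generalizing w with
  | zero => simp [ghostComponent_apply, wittPolynomial_zero]
  | succ m ih => rw [iterate_succ_apply, ih, ghostComponent_frobenius]

theorem truncate_iterate_verschiebung_congr {w w' : WittVector p R} (h : w.coeff 0 = w'.coeff 0)
    (m : ℕ) : truncate (m + 1) (verschiebung^[m] w) = truncate (m + 1) (verschiebung^[m] w') := by
  ext i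
  rw [coeff_truncate, coeff_truncate]
  rcases Nat.lt_succ_iff_lt_or_eq.mp i.isLt with hi | hi
  · rw [iterate_verschiebung_coeff_eq_zero _ hi, iterate_verschiebung_coeff_eq_zero _ hi]
  · have hcoeff (v : WittVector p R) := iterate_verschiebung_coeff v m 0
    simpa [hi] using (hcoeff w).trans (h.trans (hcoeff w').symm)

noncomputable def ofLastCoeff (m : ℕ) : R →+ TruncatedWittVector p (m + 1) R where
  toFun r := truncate (m + 1) (verschiebung^[m] (teichmuller p r))
  map_zero' := by rw [teichmuller_zero, iterate_map_zero, map_zero]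
  map_add' r s := by
    rw [← map_add, ← iterate_map_add]
    exact truncate_iterate_verschiebung_congr (by simp [add_coeff_zero]) m

theorem ofLastCoeff_apply (m : ℕ) (r : R) :
    ofLastCoeff (p := p) m r = truncate (m + 1) (verschiebung^[m] (teichmuller p r)) :=
  rfl

theorem coeff_ofLastCoeff (m : ℕ) (r : R) (i : Fin (m + 1)) :
    (ofLastCoeff (p := p) m r).coeff i = if (i : ℕ) = m then r else 0 := by
  rw [ofLastCoeff_apply, coeff_truncate]
  split_ifs with hi
  · simpa [hi] using iterate_verschiebung_coeff (teichmuller p r) m 0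
  · exact iterate_verschiebung_coeff_eq_zero _ (by omega)

theorem truncate_mul_ofLastCoeff (m : ℕ) (w : WittVector p R) (r : R) :
    truncate (m + 1) w * ofLastCoeff m r = ofLastCoeff m (ghostComponent m w * r) := by
  rw [ofLastCoeff_apply, ofLastCoeff_apply, ← map_mul, mul_comm, iterate_verschiebung_mul_left]
  refine truncate_iterate_verschiebung_congr ?_ m
  rw [mul_coeff_zero, coeff_zero_iterate_frobenius, teichmuller_coeff_zero,
    teichmuller_coeff_zero, mul_comm]

theorem exact_ofLastCoeff_truncate (m : ℕ) :
    Exact (ofLastCoeff (p := p) (R := R) m) (TruncatedWittVector.truncate (Nat.le_succ m)) := by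
  intro y
  obtain ⟨w, rfl⟩ := truncate_surjective p (m + 1) R y
  rw [TruncatedWittVector.truncate_wittVector_truncate, ← RingHom.mem_ker, mem_ker_truncate]
  constructor
  · intro hw
    refine ⟨w.coeff m, TruncatedWittVector.ext fun i => ?_⟩
    rw [coeff_ofLastCoeff, coeff_truncate]
    split_ifs with hi
    · rw [hi]
    · exact (hw i (by omega)).symm
  · rintro ⟨r, hr⟩ i hi
    have := congr_arg (TruncatedWittVector.coeff ⟨i, by omega⟩) hr
    rwa [coeff_ofLastCoeff, coeff_truncate, if_neg hi.ne, eq_comm] at this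

variable (p) {ι : Type*}

noncomputable def aevalTeichmuller (x : ι → R) : MvPolynomial ι ℤ →+* WittVector p R :=
  (aeval fun i => teichmuller p (x i)).toRingHom

theorem ghostComponent_comp_aevalTeichmuller (x : ι → R) (m : ℕ) :
    (ghostComponent m).comp (aevalTeichmuller p x) = (aeval fun i => x i ^ p ^ m).toRingHom :=
  MvPolynomial.ringHom_ext (fun _ => by simp) fun i => by
    simp [aevalTeichmuller, ghostComponent_teichmuller]

theorem finite_truncate_comp_aevalTeichmuller [Finite ι] {x : ι → R}
    (hx : adjoin ℤ (Set.range x) = ⊤) (m : ℕ) :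
    ((truncate m).comp (aevalTeichmuller p x)).Finite := by
  induction m with
  | zero =>
    let _ := ((truncate 0).comp (aevalTeichmuller p x)).toAlgebra
    have : Subsingleton (TruncatedWittVector p 0 R) :=
      ⟨fun _ _ => TruncatedWittVector.ext (·.elim0)⟩
    exact Module.Finite.of_finite
  | succ m ih =>
    let _ := ((truncate (m + 1)).comp (aevalTeichmuller p x)).toAlgebra
    let _ := ((truncate m).comp (aevalTeichmuller p x)).toAlgebra
    let _ := ((ghostComponent m).comp (aevalTeichmuller p x)).toAlgebra
    have : Module.Finite (MvPolynomial ι ℤ) R := by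
      have := MvPolynomial.finite_aeval_pow hx (pow_pos (Fact.out : p.Prime).pos m)
      rwa [AlgHom.Finite, ← ghostComponent_comp_aevalTeichmuller] at this
    have : Module.Finite (MvPolynomial ι ℤ) (TruncatedWittVector p m R) := ih
    let f : R →ₗ[MvPolynomial ι ℤ] TruncatedWittVector p (m + 1) R :=
      { ofLastCoeff m with map_smul' := fun a r => (truncate_mul_ofLastCoeff m _ r).symm }
    let g : TruncatedWittVector p (m + 1) R →ₗ[MvPolynomial ι ℤ] TruncatedWittVector p m R :=
      { TruncatedWittVector.truncate (Nat.le_succ m) with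
        map_smul' := fun a w => by
          change TruncatedWittVector.truncate _ (_ * w) = _ * _
          rw [map_mul, RingHom.comp_apply, TruncatedWittVector.truncate_wittVector_truncate]
          rfl }
    exact Module.Finite.of_exact (f := f) (g := g) (exact_ofLastCoeff_truncate m)
      (TruncatedWittVector.truncate_surjective (Nat.le_succ m))

end WittVector

theorem stmt_3_general (p : ℕ) [Fact p.Prime] (n : ℕ) (R : Type*) [CommRing R]
    [Algebra.FiniteType ℤ R] :
    IsNoetherianRing (TruncatedWittVector p n R) := by
  obtain ⟨s, hs⟩ := Algebra.FiniteType.out (R := ℤ) (A := R)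
  have hx : adjoin ℤ (Set.range ((↑) : s → R)) = ⊤ := by simpa using hs
  let _ :=
    ((WittVector.truncate n).comp (WittVector.aevalTeichmuller p ((↑) : s → R))).toAlgebra
  have : Module.Finite (MvPolynomial s ℤ) (TruncatedWittVector p n R) :=
    WittVector.finite_truncate_comp_aevalTeichmuller p hx n
  exact isNoetherianRing_iff.2 <| isNoetherian_of_tower (MvPolynomial s ℤ) inferInstance

theorem stmt_3 (p : ℕ) [Fact p.Prime] (n : ℕ) (hn : 1 ≤ n) (R : Type*) [CommRing R]
    [Algebra.FiniteType ℤ R] :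
    IsNoetherianRing (TruncatedWittVector p n R) :=
  stmt_3_general p n R
end

section
/- (Lemma 3.2.6(ii) of the paper.) Let A be a commutative ring and P a nonempty set of prime numbers; write ℤ_P for the localization of ℤ inverting all primes in P, and for p ∈ P write ℤ_{P∖{p}} for the localization of ℤ inverting all primes in P∖{p}. Let M and N be A-modules such that the canonical map N → N ⊗_ℤ ℤ_P, n ↦ n ⊗ 1, is injective. Suppose given for each p ∈ P an A-linear and ℤ_{P∖{p}}-linear map f_p : M ⊗_ℤ ℤ_{P∖{p}} → N ⊗_ℤ ℤ_{P∖{p}} such that for all p, ℓ ∈ P the further base changes f_p ⊗_{ℤ_{P∖{p}}} ℤ_P and f_ℓ ⊗_{ℤ_{P∖{ℓ}}} ℤ_P agree as maps M ⊗_ℤ ℤ_P → N ⊗_ℤ ℤ_P, under the canonical isomorphisms (M ⊗_ℤ ℤ_{P∖{p}}) ⊗_{ℤ_{P∖{p}}} ℤ_P ≅ M ⊗_ℤ ℤ_P. Then there exists a unique A-linear map f : M → N with f_p = f ⊗ id for every p ∈ P. -/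
/-!
Every element of `N ⊗ ℤ_Q` becomes a pure tensor `n ⊗ 1` after multiplication by some element
of the submonoid generated by `Q`, and these elements act invertibly.  Hence injectivity of
`N → N ⊗ ℤ_P` passes to `N → N ⊗ ℤ_{P∖{p}}` and to the base changes
`N ⊗ ℤ_{P∖{p}} → N ⊗ ℤ_P`.  An element `y` of `N ⊗ ℤ_P` lying in the image of every
`N ⊗ ℤ_{P∖{p}}` comes from `N`: some `s y` does, with `s` a product of primes of `P`, and the
primes can be removed one at a time, since for each `p ∈ P` some `t` prime to `p` also has `t y`
coming from `N`, and then `y = (u p + v t) y`.  Applied to the common base change of the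
`f_p (m ⊗ 1)` this defines `F`, and `ℤ_{P∖{p}}`-linearity of `f_p` gives `f_p = F ⊗ id`.
-/

open scoped TensorProduct

/-- `ℤ` with the primes in `Q` inverted. -/
abbrev ZLoc (Q : Set ℕ) : Type :=
  Localization (Submonoid.closure ((Nat.cast : ℕ → ℤ) '' Q))

/-- The canonical ring homomorphism `ℤ_Q → ℤ_{Q'}` for `Q ⊆ Q'`. -/
noncomputable def zlocMap {Q Q' : Set ℕ} (h : Q ⊆ Q') : ZLoc Q →+* ZLoc Q' :=
  IsLocalization.map (M := Submonoid.closure ((Nat.cast : ℕ → ℤ) '' Q))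
    (T := Submonoid.closure ((Nat.cast : ℕ → ℤ) '' Q')) _ (RingHom.id ℤ)
    (fun x hx => Submonoid.closure_mono (Set.image_mono h) hx)

open Function TensorProduct LinearMap

theorem Submodule.mem_of_isCoprime_smul_mem {R X : Type*} [CommSemiring R] [AddCommMonoid X]
    [Module R X] (W : Submodule R X) {a b : R} (h : IsCoprime a b) {y : X} (ha : a • y ∈ W)
    (hb : b • y ∈ W) : y ∈ W := by
  obtain ⟨u, v, huv⟩ := h
  have := W.add_mem (W.smul_mem u ha) (W.smul_mem v hb)
  rwa [smul_smul, smul_smul, ← add_smul, huv, one_smul] at this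

theorem Submodule.mem_of_smul_mem_of_mem_closure {R X : Type*} [CommSemiring R] [AddCommMonoid X]
    [Module R X] (W : Submodule R X) {T : Set R} {y : X}
    (hy : ∀ a ∈ T, ∃ b, IsCoprime a b ∧ b • y ∈ W) {s : R} (hs : s ∈ Submonoid.closure T)
    (hsy : s • y ∈ W) : y ∈ W := by
  induction hs using Submonoid.closure_induction generalizing y with
  | mem a ha =>
    obtain ⟨b, hab, hb⟩ := hy a ha
    exact W.mem_of_isCoprime_smul_mem hab hsy hb
  | one => simpa using hsy
  | mul a b _ _ iha ihb =>
    refine ihb hy (iha (fun c hc => ?_) (by rwa [smul_smul]))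
    obtain ⟨d, hcd, hd⟩ := hy c hc
    exact ⟨d, hcd, by rw [smul_comm]; exact W.smul_mem b hd⟩

abbrev zlocSubmonoid (Q : Set ℕ) : Submonoid ℤ := Submonoid.closure ((Nat.cast : ℕ → ℤ) '' Q)

theorem isCoprime_of_mem_zlocSubmonoid {p : ℕ} (hp : p.Prime) {Q : Set ℕ}
    (hQ : ∀ q ∈ Q, q.Prime) (hpQ : p ∉ Q) {t : ℤ}
    (ht : t ∈ zlocSubmonoid Q) : IsCoprime (p : ℤ) t := by
  induction ht using Submonoid.closure_induction with
  | mem _ hq =>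
    obtain ⟨q, hq, rfl⟩ := hq
    exact Nat.isCoprime_iff_coprime.mpr ((Nat.coprime_primes hp (hQ q hq)).mpr
      (ne_of_mem_of_not_mem hq hpQ).symm)
  | one => exact isCoprime_one_right
  | mul _ _ _ _ h₁ h₂ => exact h₁.mul_right h₂

theorem isLocalizedModule_mk_flip_one {R : Type*} [CommSemiring R] (S : Submonoid R) (L : Type*)
    [CommSemiring L] [Algebra R L] [IsLocalization S L] (M : Type*) [AddCommMonoid M]
    [Module R M] : IsLocalizedModule S ((TensorProduct.mk R M L).flip 1) := by
  convert IsLocalizedModule.of_linearEquiv S (TensorProduct.mk R L M 1) (TensorProduct.comm R L M)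
  ext
  rfl

theorem LinearMap.eq_rTensor_of_tmul_one {k R M N : Type*} [CommSemiring k] [Semiring R]
    [Module k R] [SMulCommClass k R R] [IsScalarTower k R R]
    [AddCommMonoid M] [AddCommMonoid N] [Module k M] [Module k N] (g : M ⊗[k] R →ₗ[k] N ⊗[k] R)
    (hg : ∀ c x, g (lTensor M (mulLeft k c) x) = lTensor N (mulLeft k c) (g x))
    (F : M →ₗ[k] N) (hF : ∀ m, g (m ⊗ₜ 1) = F m ⊗ₜ 1) : g = rTensor R F :=
  TensorProduct.ext' fun m c => by
    rw [show m ⊗ₜ[k] c = lTensor M (mulLeft k c) (m ⊗ₜ 1) by simp, hg, hF]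
    simp

theorem exists_linearMap_tmul_eq {k A M N L : Type*} [CommSemiring k] [Semiring A] [Algebra k A]
    [AddCommMonoid M] [AddCommMonoid N] [Module k M] [Module k N] [Module A M] [Module A N]
    [IsScalarTower k A M] [IsScalarTower k A N] [AddCommMonoid L] [Module k L] (l : L)
    (hinj : Injective fun n : N => n ⊗ₜ[k] l) (g : M ⊗[k] L →ₗ[A] N ⊗[k] L)
    (hg : ∀ m : M, ∃ n : N, n ⊗ₜ[k] l = g (m ⊗ₜ[k] l)) :
    ∃ F : M →ₗ[A] N, ∀ m, F m ⊗ₜ[k] l = g (m ⊗ₜ[k] l) := by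
  let ι : N →ₗ[A] N ⊗[k] L := (AlgebraTensorModule.mk k A N L).flip l
  let κ : M →ₗ[A] M ⊗[k] L := (AlgebraTensorModule.mk k A M L).flip l
  exact ⟨(LinearEquiv.ofInjective ι hinj).symm ∘ₗ (g ∘ₗ κ).codRestrict (range ι) hg,
    fun m => LinearEquiv.ofInjective_symm_apply (f := ι) (h := hinj) _⟩

instance ZLoc.isLocalizedModule (N : Type*) [AddCommGroup N] (Q : Set ℕ) :
    IsLocalizedModule (zlocSubmonoid Q) ((TensorProduct.mk ℤ N (ZLoc Q)).flip 1) := by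
  have h := isLocalizedModule_mk_flip_one (zlocSubmonoid Q) (ZLoc Q) N
  -- `N ⊗[ℤ] ZLoc Q` is formed with the ℤ-module structure of the additive group `ZLoc Q`,
  -- which is only propositionally equal to the one coming from `Algebra ℤ (ZLoc Q)`.
  rwa [Subsingleton.elim (Algebra.toModule : Module ℤ (ZLoc Q)) (AddCommGroup.toIntModule _)] at h

section ZLoc

variable {N : Type*} [AddCommGroup N]

variable (N) in
noncomputable def zlocBaseChange {Q Q' : Set ℕ} (h : Q ⊆ Q') :
    N ⊗[ℤ] ZLoc Q →ₗ[ℤ] N ⊗[ℤ] ZLoc Q' :=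
  lTensor N (zlocMap h).toAddMonoidHom.toIntLinearMap

@[simp]
theorem zlocBaseChange_tmul_one {Q Q' : Set ℕ} (h : Q ⊆ Q') (n : N) :
    zlocBaseChange N h (n ⊗ₜ 1) = n ⊗ₜ 1 :=
  (lTensor_tmul _ _ _ _).trans (congrArg (n ⊗ₜ ·) (map_one (zlocMap h)))

theorem tmul_one_injective_of_subset {Q Q' : Set ℕ} (h : Q ⊆ Q')
    (hinj : Injective fun n : N => n ⊗ₜ[ℤ] (1 : ZLoc Q')) :
    Injective fun n : N => n ⊗ₜ[ℤ] (1 : ZLoc Q) := fun x y hxy =>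
  hinj (by simpa only [zlocBaseChange_tmul_one] using congrArg (zlocBaseChange N h) hxy)

theorem zlocBaseChange_injective {Q Q' : Set ℕ} (h : Q ⊆ Q')
    (hinj : Injective fun n : N => n ⊗ₜ[ℤ] (1 : ZLoc Q')) : Injective (zlocBaseChange N h) :=
  IsLocalizedModule.injective_of_map_eq (zlocSubmonoid Q) ((TensorProduct.mk ℤ N (ZLoc Q)).flip 1)
    fun {x y} hxy => congrArg _ <| hinj <| by
      have hxy' : zlocBaseChange N h (x ⊗ₜ 1) = zlocBaseChange N h (y ⊗ₜ 1) := hxy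
      rwa [zlocBaseChange_tmul_one, zlocBaseChange_tmul_one] at hxy'

theorem exists_tmul_one_eq_of_forall_mem_range {P : Set ℕ} (hP : ∀ p ∈ P, p.Prime)
    (y : N ⊗[ℤ] ZLoc P)
    (hy : ∀ p ∈ P, y ∈ range (zlocBaseChange N (Set.sdiff_subset (s := P) (t := {p})))) :
    ∃ n : N, n ⊗ₜ 1 = y := by
  obtain ⟨⟨n, s⟩, hs⟩ :=
    IsLocalizedModule.surj (zlocSubmonoid P) ((TensorProduct.mk ℤ N (ZLoc P)).flip 1) y
  refine (range ((TensorProduct.mk ℤ N (ZLoc P)).flip 1)).mem_of_smul_mem_of_mem_closure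
    (fun a ha => ?_) s.2 ⟨n, hs.symm⟩
  obtain ⟨p, hp, rfl⟩ := ha
  obtain ⟨z, rfl⟩ := hy p hp
  obtain ⟨⟨m, t⟩, ht⟩ := IsLocalizedModule.surj (zlocSubmonoid (P \ {p}))
    ((TensorProduct.mk ℤ N (ZLoc (P \ {p}))).flip 1) z
  refine ⟨t, isCoprime_of_mem_zlocSubmonoid (hP p hp) (fun q hq => hP q hq.1) (fun h => h.2 rfl)
    t.2, m, ?_⟩
  rw [← map_smul, ← Submonoid.smul_def, ht]
  simp

end ZLoc

theorem stmt_14 (A : Type*) [CommRing A] (P : Set ℕ) (hP : ∀ p ∈ P, p.Prime)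
    (hne : P.Nonempty) (M N : Type*) [AddCommGroup M] [AddCommGroup N]
    [Module A M] [Module A N]
    (hinj : Function.Injective fun x : N => (x ⊗ₜ[ℤ] (1 : ZLoc P) : N ⊗[ℤ] ZLoc P))
    (f : ∀ p ∈ P, (M ⊗[ℤ] ZLoc (P \ {p})) →ₗ[A] (N ⊗[ℤ] ZLoc (P \ {p})))
    -- each `f p` is moreover `ℤ_{P∖{p}}`-linear
    (hlin : ∀ (p) (hp : p ∈ P) (c : ZLoc (P \ {p})) (x : M ⊗[ℤ] ZLoc (P \ {p})),
      f p hp (LinearMap.lTensor M (LinearMap.mulLeft ℤ c) x) =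
        LinearMap.lTensor N (LinearMap.mulLeft ℤ c) (f p hp x))
    -- the base changes of the `f p` to `ℤ_P` all agree
    (hcompat : ∀ (p) (hp : p ∈ P) (ℓ) (hℓ : ℓ ∈ P) (m : M),
      LinearMap.lTensor N ((zlocMap (Set.diff_subset (s := P) (t := {p}))).toAddMonoidHom.toIntLinearMap)
          (f p hp (m ⊗ₜ[ℤ] 1)) =
        LinearMap.lTensor N ((zlocMap (Set.diff_subset (s := P) (t := {ℓ}))).toAddMonoidHom.toIntLinearMap)
          (f ℓ hℓ (m ⊗ₜ[ℤ] 1))) :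
    ∃! F : M →ₗ[A] N, ∀ (p) (hp : p ∈ P) (x : M ⊗[ℤ] ZLoc (P \ {p})),
      f p hp x = LinearMap.rTensor (ZLoc (P \ {p})) (F.restrictScalars ℤ) x := by
  obtain ⟨p₀, hp₀⟩ := hne
  have hinj₀ := tmul_one_injective_of_subset (Set.sdiff_subset (s := P) (t := {p₀})) hinj
  have hdesc (m : M) : ∃ n : N, n ⊗ₜ 1 = f p₀ hp₀ (m ⊗ₜ 1) := by
    obtain ⟨n, hn⟩ := exists_tmul_one_eq_of_forall_mem_range hP
      (zlocBaseChange N _ (f p₀ hp₀ (m ⊗ₜ 1)))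
      fun p hp => ⟨f p hp (m ⊗ₜ 1), hcompat p hp p₀ hp₀ m⟩
    exact ⟨n, zlocBaseChange_injective _ hinj (by rw [zlocBaseChange_tmul_one, hn])⟩
  obtain ⟨F, hF⟩ := exists_linearMap_tmul_eq 1 hinj₀ (f p₀ hp₀) hdesc
  have hFp (p : ℕ) (hp : p ∈ P) (m : M) : f p hp (m ⊗ₜ 1) = F m ⊗ₜ 1 := by
    apply zlocBaseChange_injective Set.sdiff_subset hinj
    rw [zlocBaseChange_tmul_one]
    calc zlocBaseChange N _ (f p hp (m ⊗ₜ 1))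
        = zlocBaseChange N _ (f p₀ hp₀ (m ⊗ₜ 1)) := hcompat p hp p₀ hp₀ m
      _ = F m ⊗ₜ 1 := by rw [← hF, zlocBaseChange_tmul_one]
  refine ⟨F, fun p hp => LinearMap.congr_fun <| ((f p hp).restrictScalars ℤ).eq_rTensor_of_tmul_one
    (hlin p hp) (F.restrictScalars ℤ) (hFp p hp), fun F' hF' => ?_⟩
  ext m
  exact hinj₀ ((hF' p₀ hp₀ (m ⊗ₜ 1)).symm.trans (hF m).symm)
end
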